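/- Let n, m ∈ ℕ with m ≤ n, let π be a permutation of Fin n, and let B₀, B₁ be disjoint subsets of Fin n with B₀ ∪ B₁ = { i : Fin n | (π i : ℕ) < m }. Define y : Fin n → ℝ by y i = 1 if i ∈ B₁ and y i = 0 otherwise. Let x : Fin n → ℝ satisfy x i ∈ {0,1} for all i, x i = 1 for all i ∈ B₁, and x i = 0 for all i ∈ B₀. Then for every permutation γ of Fin n: if (π • y)|m ≺ (π • (γ • y))|m, then (π • x)|m ≺ (π • (γ • x))|m; in particular x violates the symmetry handling constraint (π • x)|m ⪰ (π • (γ • x))|m. -/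

import Mathlib

/-- Action of a permutation of `Fin n` on vectors `x : Fin n → ℝ`:
`(γ • x) i = x (γ⁻¹ i)`. -/
def pact {n : ℕ} (γ : Equiv.Perm (Fin n)) (x : Fin n → ℝ) : Fin n → ℝ :=
  fun i => x (γ⁻¹ i)

/-- Lexicographic order `u ⪰ v` on `Fin m → ℝ`. -/
def lexGe {m : ℕ} (u v : Fin m → ℝ) : Prop :=
  u = v ∨ ∃ k : Fin m, (∀ i : Fin m, i < k → u i = v i) ∧ v k < u k

/-- Strict lexicographic order: `u ≻ v`. -/
def lexGt {m : ℕ} (u v : Fin m → ℝ) : Prop :=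
  lexGe u v ∧ u ≠ v

/-- Restriction of `z : Fin n → ℝ` to its first `m` coordinates. -/
def restr {n : ℕ} (m : ℕ) (h : m ≤ n) (z : Fin n → ℝ) : Fin m → ℝ :=
  fun k => z (Fin.castLE h k)

/-!
Every coordinate among the first `m` of `π • x` belongs to a branched variable, so
`(π • x)|m = (π • y)|m`, while `y ≤ x` pointwise. Since lexicographic order is monotone under the
pointwise order, `(π • y)|m ≺ (π • (γ • y))|m ≤ (π • (γ • x))|m` gives `(π • x)|m ≺ (π • (γ • x))|m`.
-/

lemma toLex_lt_toLex_iff {m : ℕ} {u v : Fin m → ℝ} :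
    toLex v < toLex u ↔ ∃ k : Fin m, (∀ i : Fin m, i < k → u i = v i) ∧ v k < u k :=
  exists_congr fun _ => and_congr_left' (forall₂_congr fun _ _ => eq_comm)

lemma lexGe_iff_toLex_le {m : ℕ} {u v : Fin m → ℝ} : lexGe u v ↔ toLex v ≤ toLex u := by
  rw [le_iff_lt_or_eq, toLex_inj, eq_comm, or_comm]
  exact or_congr_right toLex_lt_toLex_iff.symm

lemma lexGt_iff_toLex_lt {m : ℕ} {u v : Fin m → ℝ} : lexGt u v ↔ toLex v < toLex u := by
  rw [lexGt, lexGe_iff_toLex_le]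
  exact ⟨fun ⟨hle, hne⟩ => hle.lt_of_ne fun h => hne (toLex_inj.mp h).symm,
    fun h => ⟨h.le, fun heq => h.ne (congrArg toLex heq.symm)⟩⟩

lemma pact_mono {n : ℕ} (γ : Equiv.Perm (Fin n)) : Monotone (pact γ) :=
  fun _ _ h _ => h _

lemma restr_mono {n : ℕ} (m : ℕ) (h : m ≤ n) : Monotone (restr m h) :=
  fun _ _ hxy _ => hxy _

lemma restr_pact_eq_of_eqOn {n m : ℕ} (h : m ≤ n) (π : Equiv.Perm (Fin n)) {x y : Fin n → ℝ}
    (hxy : Set.EqOn x y {i | (π i : ℕ) < m}) : restr m h (pact π x) = restr m h (pact π y) := by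
  funext k
  exact hxy (by simp)

theorem stmt1 (n m : ℕ) (hmn : m ≤ n) (π : Equiv.Perm (Fin n))
    (B₀ B₁ : Set (Fin n)) (hdisj : Disjoint B₀ B₁)
    (hcover : B₀ ∪ B₁ = {i : Fin n | (π i : ℕ) < m})
    (y : Fin n → ℝ) (hy : y = B₁.indicator fun _ => (1 : ℝ))
    (x : Fin n → ℝ) (hx01 : ∀ i, x i = 0 ∨ x i = 1)
    (hx1 : ∀ i ∈ B₁, x i = 1) (hx0 : ∀ i ∈ B₀, x i = 0) :
    ∀ γ : Equiv.Perm (Fin n),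
      lexGt (restr m hmn (pact π (pact γ y))) (restr m hmn (pact π y)) →
        lexGt (restr m hmn (pact π (pact γ x))) (restr m hmn (pact π x)) ∧
        ¬ lexGe (restr m hmn (pact π x)) (restr m hmn (pact π (pact γ x))) := by
  intro γ hy_gt
  have hyx : y ≤ x := hy ▸ Set.indicator_le' (fun i hi => (hx1 i hi).ge)
    (fun i _ => by rcases hx01 i with h | h <;> simp [h])
  have hxy : restr m hmn (pact π x) = restr m hmn (pact π y) := by
    refine restr_pact_eq_of_eqOn hmn π (hcover ▸ ?_)
    rintro i (hi | hi)
    · simp [hy, hx0 i hi, Set.indicator_of_notMem (hdisj.notMem_of_mem_left hi)]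
    · simp [hy, hx1 i hi, hi]
  rw [lexGt_iff_toLex_lt] at hy_gt
  have hx_gt : toLex (restr m hmn (pact π x)) < toLex (restr m hmn (pact π (pact γ x))) :=
    hxy ▸ hy_gt.trans_le (Pi.toLex_monotone (restr_mono m hmn (pact_mono π (pact_mono γ hyx))))
  exact ⟨lexGt_iff_toLex_lt.mpr hx_gt, fun hge => (lexGe_iff_toLex_le.mp hge).not_gt hx_gt⟩
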